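/- Let c be a choice function on a finite nonempty set X with |X| ≥ 2. Then c is strongly harmful (i.e., sp(c) = |X|−1) if and only if c violates WARP under constant nonreciprocal selection of |X|−1 items. -/

import Mathlib

variable {X : Type*}

/-- A strict linear order: asymmetric, transitive, complete. -/
def IsSLO (r : X → X → Prop) : Prop :=
  (∀ a b : X, r a b → ¬ r b a) ∧ (∀ a b d : X, r a b → r b d → r a d) ∧
    (∀ a b : X, a ≠ b → r a b ∨ r b a)

/-- The set of the top `i` elements of `X` with respect to `r`
(those with fewer than `i` elements strictly above them). -/
def topSet (r : X → X → Prop) (i : ℕ) : Set X := {a | Set.ncard {b | r b a} < i}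

/-- The `i`-th harmful distortion of `r`: the top `i` elements are moved,
in reverse order, below all the other elements. -/
def harmful (r : X → X → Prop) (i : ℕ) : X → X → Prop := fun a b =>
  (b ∈ topSet r i ∧ (a ∈ topSet r i → r b a)) ∨
    (a ∉ topSet r i ∧ b ∉ topSet r i ∧ r a b)

/-- A choice function selects an element from every nonempty menu. -/
def IsChoice (c : Finset X → X) : Prop := ∀ A : Finset X, A.Nonempty → c A ∈ A

/-- `x` is the `r`-maximum of the menu `A`. -/
def IsMaxOf (r : X → X → Prop) (A : Finset X) (x : X) : Prop :=
  x ∈ A ∧ ∀ y ∈ A, y ≠ x → r x y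

/-- A reversal (violation of WARP) of `c`. -/
def IsReversal [DecidableEq X] (c : Finset X → X) (A B : Finset X) : Prop :=
  A.Nonempty ∧ B.Nonempty ∧ A ≠ B ∧ c A ≠ c B ∧ c A ∈ A ∩ B ∧ c B ∈ A ∩ B

/-- `I` is (the index set of) a rationalization by self-punishment of `c` by `r`. -/
def RSP [Fintype X] (c : Finset X → X) (r : X → X → Prop) (I : Finset ℕ) : Prop :=
  I.Nonempty ∧ (∀ i ∈ I, i ≤ Fintype.card X - 1) ∧
    ∀ A : Finset X, A.Nonempty → ∃ i ∈ I, IsMaxOf (harmful r i) A (c A)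

/-- The degree of self-punishment of `c`: the minimum over all strict linear orders `r`
and all rationalizations by self-punishment of `c` by `r` of the maximal index used. -/
noncomputable def sp [Fintype X] (c : Finset X → X) : ℕ :=
  sInf { m : ℕ | ∃ r : X → X → Prop, IsSLO r ∧ ∃ I : Finset ℕ,
    RSP c r I ∧ m ∈ I ∧ ∀ i ∈ I, i ≤ m }

/-- `c` is inconsistent: every ordered pair of distinct items is selected in some reversal. -/
def Inconsistent [DecidableEq X] (c : Finset X → X) : Prop :=
  ∀ x y : X, x ≠ y → ∃ A B : Finset X, IsReversal c A B ∧ c A = x ∧ c B = y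

/-- The revealed preference `▷^{c,x}`. -/
def cxPref (c : Finset X → X) (x : X) : X → X → Prop := fun y z =>
  (y = x ∧ z ≠ x) ∨
    (y ≠ x ∧ z ≠ x ∧ y ≠ z ∧ ∃ A : Finset X, x ∉ A ∧ z ∈ A ∧ c A = y)

/-- `c` violates WARP under constant nonreciprocal selection of `j` items. -/
def ViolatesCNS [Fintype X] [DecidableEq X] (c : Finset X → X) (j : ℕ) : Prop :=
  (∀ D : Finset X, D.card < j → ∃ A B : Finset X, IsReversal c A B ∧ c A ∉ D ∧ c B ∉ D) ∧
    ∃ xs : Finset X, xs.card = j ∧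
      (∀ A B : Finset X, IsReversal c A B → c A ∈ xs ∨ c B ∈ xs) ∧
      (∀ x ∈ xs, ∃ A B : Finset X, ∃ y : X, IsReversal c A B ∧ y ∉ xs ∧
        ((c A = x ∧ c B = y) ∨ (c A = y ∧ c B = x)))

/-- The relation `▷^c` built from the witnesses `x 1, …, x j`. -/
def witnessPref (c : Finset X → X) (x : ℕ → X) (j : ℕ) : X → X → Prop := fun y z =>
  (∃ g h : ℕ, 1 ≤ g ∧ g < h ∧ h ≤ j ∧ y = x g ∧ z = x h) ∨
    ((∀ g : ℕ, 1 ≤ g → g ≤ j → y ≠ x g) ∧ (∀ g : ℕ, 1 ≤ g → g ≤ j → z ≠ x g) ∧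
      ∃ A : Finset X, z ∈ A ∧ c A = y) ∨
    ((∃ g : ℕ, 1 ≤ g ∧ g ≤ j ∧ y = x g) ∧ (∀ g : ℕ, 1 ≤ g → g ≤ j → z ≠ x g))


/-!
Both sides say that `c` is inconsistent, i.e. that each item `x` is chosen from some menu
containing any other given item `y`.

Let `n = card X`. If some `v` is never chosen from a menu containing `w`, rank `v` last and
`w` second to last: choices of `v` are rationalized by the distortion reversing the top `n - 2`
items, every other choice `a` by the distortion at its own rank, which is at most `n - 2`.
Conversely, if only distortions of index at most `n - 2` are used, the second-to-last item is
never moved, so the last item is never chosen over it. For the WARP side, a reversal whose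
choices avoid the `n - 2` items outside `{v, w}` is a reversal between `v` and `w`.
-/

open Finset Function

section Rank

variable {r : X → X → Prop}

theorem IsSLO.irrefl (hr : IsSLO r) (a : X) : ¬ r a a :=
  fun h => hr.1 a a h h

theorem isSLO_lt_comp {α : Type*} [LinearOrder α] {f : X → α} (hf : Injective f) :
    IsSLO fun a b => f a < f b :=
  ⟨fun _ _ h => h.asymm, fun _ _ _ => lt_trans,
    fun _ _ hab => lt_or_gt_of_ne (hf.ne hab)⟩

noncomputable def rank (r : X → X → Prop) (a : X) : ℕ := Set.ncard {b | r b a}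

theorem mem_topSet_iff {a : X} {i : ℕ} : a ∈ topSet r i ↔ rank r a < i := Iff.rfl

theorem IsSLO.rank_lt_rank [Finite X] (hr : IsSLO r) {a b : X} (h : r a b) :
    rank r a < rank r b :=
  Set.ncard_lt_ncard ((Set.ssubset_iff_of_subset fun d hd => hr.2.1 d a b hd h).2
    ⟨a, h, hr.irrefl a⟩)

theorem IsSLO.rank_lt_rank_iff [Finite X] (hr : IsSLO r) {a b : X} :
    rank r a < rank r b ↔ r a b := by
  refine ⟨fun h => ?_, hr.rank_lt_rank⟩
  rcases eq_or_ne a b with rfl | hab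
  · exact absurd h (lt_irrefl _)
  · exact (hr.2.2 a b hab).resolve_right fun hba => (hr.rank_lt_rank hba).asymm h

theorem IsSLO.rank_injective [Finite X] (hr : IsSLO r) : Injective (rank r) := by
  intro a b h
  by_contra hab
  rcases hr.2.2 a b hab with hab | hba
  · exact (hr.rank_lt_rank hab).ne h
  · exact (hr.rank_lt_rank hba).ne h.symm

theorem IsSLO.isMaxOf_harmful_rank [Finite X] (hr : IsSLO r) {A : Finset X} {a : X}
    (ha : a ∈ A) : IsMaxOf (harmful r (rank r a)) A a := by
  have ha_top : a ∉ topSet r (rank r a) := mem_topSet_iff.not.2 (lt_irrefl _)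
  refine ⟨ha, fun y _ hya => ?_⟩
  by_cases hy_top : y ∈ topSet r (rank r a)
  · exact Or.inl ⟨hy_top, fun h => absurd h ha_top⟩
  · refine Or.inr ⟨ha_top, hy_top, hr.rank_lt_rank_iff.1 ?_⟩
    exact lt_of_le_of_ne (not_lt.1 hy_top) (hr.rank_injective.ne hya.symm)

variable [Fintype X]

theorem exists_isSLO : ∃ r : X → X → Prop, IsSLO r :=
  ⟨_, isSLO_lt_comp (Fintype.equivFin X).injective⟩

theorem rank_eq_card_sub [DecidableEq X] {a : X} {s : Finset X} (hs : ∀ b, r b a ↔ b ∉ s) :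
    rank r a = Fintype.card X - #s := by
  have : {b | r b a} = ↑(univ \ s) := by ext b; simp [hs]
  rw [rank, this, Set.ncard_coe_finset, card_univ_sdiff]

theorem IsSLO.rank_lt_card (hr : IsSLO r) (a : X) : rank r a < Fintype.card X := by
  rw [← Nat.card_eq_fintype_card]
  exact Set.ncard_lt_card fun h => hr.irrefl a (h.symm ▸ Set.mem_univ a : a ∈ {b | r b a})

theorem IsSLO.exists_rank_eq (hr : IsSLO r) {k : ℕ} (hk : k < Fintype.card X) :
    ∃ a, rank r a = k := by
  have himage : univ.image (rank r) = range (Fintype.card X) :=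
    eq_of_subset_of_card_le (fun _ hk => by
      obtain ⟨a, -, rfl⟩ := mem_image.1 hk
      exact mem_range.2 (hr.rank_lt_card a))
      (by rw [card_image_of_injective _ hr.rank_injective, card_range, card_univ])
  have hk' : k ∈ univ.image (rank r) := himage ▸ mem_range.2 hk
  obtain ⟨a, -, ha⟩ := mem_image.1 hk'
  exact ⟨a, ha⟩

theorem exists_isSLO_rank_eq {v w : X} (hvw : v ≠ w) :
    ∃ r : X → X → Prop, IsSLO r ∧ rank r v = Fintype.card X - 1 ∧
      rank r w = Fintype.card X - 2 := by
  classical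
  set n := Fintype.card X
  let e := Fintype.equivFin X
  let key : X → ℕ := fun x => if x = v then n + 1 else if x = w then n else e x
  have hkey : Injective key := by
    intro a b h
    simp only [key] at h
    split_ifs at h <;> first | (subst_vars; rfl) | omega | exact e.injective (Fin.ext h)
  have hr := isSLO_lt_comp hkey
  refine ⟨_, hr, rank_eq_card_sub (s := {v}) fun b => ?_,
    (rank_eq_card_sub (s := {v, w}) fun b => ?_).trans (by rw [card_pair hvw])⟩
  · simp only [key, mem_singleton]
    split_ifs <;> grind
  · simp only [key, mem_insert, mem_singleton]
    split_ifs <;> grind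

end Rank

def RevealedOver (c : Finset X → X) (x y : X) : Prop := ∃ A : Finset X, y ∈ A ∧ c A = x

section Reversals

variable [DecidableEq X] {c : Finset X → X}

theorem IsReversal.symm {A B : Finset X} (h : IsReversal c A B) : IsReversal c B A :=
  have ⟨hA, hB, hAB, hc, hcA, hcB⟩ := h
  ⟨hB, hA, hAB.symm, hc.symm, inter_comm A B ▸ hcB, inter_comm A B ▸ hcA⟩

theorem IsReversal.revealedOver {A B : Finset X} (h : IsReversal c A B) :
    RevealedOver c (c A) (c B) :=
  ⟨A, (mem_inter.1 h.2.2.2.2.2).1, rfl⟩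

theorem exists_isReversal_of_revealedOver (hc : IsChoice c) {x y : X} (hxy : x ≠ y)
    (hxy' : RevealedOver c x y) (hyx : RevealedOver c y x) :
    ∃ A B, IsReversal c A B ∧ c A = x ∧ c B = y := by
  obtain ⟨A, hyA, rfl⟩ := hxy'
  obtain ⟨B, hxB, rfl⟩ := hyx
  have hA := hc A ⟨_, hyA⟩
  have hB := hc B ⟨_, hxB⟩
  exact ⟨A, B, ⟨⟨_, hyA⟩, ⟨_, hxB⟩, fun h => hxy (h ▸ rfl), hxy,
    mem_inter.2 ⟨hA, hxB⟩, mem_inter.2 ⟨hyA, hB⟩⟩, rfl, rfl⟩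

theorem inconsistent_iff_forall_revealedOver (hc : IsChoice c) :
    Inconsistent c ↔ ∀ x y, x ≠ y → RevealedOver c x y := by
  refine ⟨fun h x y hxy => ?_, fun h x y hxy =>
    exists_isReversal_of_revealedOver hc hxy (h x y hxy) (h y x hxy.symm)⟩
  obtain ⟨A, B, hAB, rfl, rfl⟩ := h x y hxy
  exact hAB.revealedOver

variable [Fintype X]

theorem Inconsistent.violatesCNS [Nonempty X] (h : Inconsistent c) :
    ViolatesCNS c (Fintype.card X - 1) := by
  refine ⟨fun D hD => ?_, ?_⟩
  · have : 1 < #(univ \ D) := by rw [card_univ_sdiff]; omega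
    obtain ⟨x, hx, y, hy, hxy⟩ := one_lt_card.1 this
    obtain ⟨A, B, hAB, rfl, rfl⟩ := h x y hxy
    exact ⟨A, B, hAB, (mem_sdiff.1 hx).2, (mem_sdiff.1 hy).2⟩
  · obtain ⟨z⟩ := ‹Nonempty X›
    refine ⟨univ.erase z, by rw [card_erase_of_mem (mem_univ z), card_univ], ?_, ?_⟩
    · intro A B hAB
      by_contra! hz
      simp only [mem_erase, ne_eq, mem_univ, and_true, not_not] at hz
      exact hAB.2.2.2.1 (hz.1.trans hz.2.symm)
    · intro x hx
      obtain ⟨A, B, hAB, hA, hB⟩ := h x z (ne_of_mem_erase hx)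
      exact ⟨A, B, z, hAB, notMem_erase z univ, Or.inl ⟨hA, hB⟩⟩

theorem ViolatesCNS.inconsistent (h : ViolatesCNS c (Fintype.card X - 1)) : Inconsistent c := by
  intro x y hxy
  have hD : #(univ \ {x, y}) < Fintype.card X - 1 := by
    have := card_le_univ {x, y}
    rw [card_univ_sdiff, card_pair hxy] at *
    omega
  obtain ⟨A, B, hAB, hA, hB⟩ := h.1 _ hD
  simp only [mem_sdiff, mem_univ, true_and, mem_insert, mem_singleton, not_not] at hA hB
  have hne := hAB.2.2.2.1
  rcases hA with hA | hA <;> rcases hB with hB | hB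
  · exact absurd (hA.trans hB.symm) hne
  · exact ⟨A, B, hAB, hA, hB⟩
  · exact ⟨B, A, hAB.symm, hB, hA⟩
  · exact absurd (hA.trans hB.symm) hne

theorem violatesCNS_card_sub_one_iff [Nonempty X] :
    ViolatesCNS c (Fintype.card X - 1) ↔ Inconsistent c :=
  ⟨ViolatesCNS.inconsistent, Inconsistent.violatesCNS⟩

end Reversals

section SelfPunishment

variable [Fintype X] {c : Finset X → X} {r : X → X → Prop}

theorem sp_le_of_rsp (hr : IsSLO r) {I : Finset ℕ} (hI : RSP c r I) {m : ℕ}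
    (hm : ∀ i ∈ I, i ≤ m) : sp c ≤ m :=
  calc sp c ≤ I.max' hI.1 := Nat.sInf_le ⟨r, hr, I, hI, I.max'_mem hI.1, fun _ => I.le_max' _⟩
    _ ≤ m := hm _ (I.max'_mem hI.1)

theorem rsp_range_card [Nonempty X] (hc : IsChoice c) (hr : IsSLO r) :
    RSP c r (range (Fintype.card X)) :=
  ⟨nonempty_range_iff.2 Fintype.card_ne_zero,
    fun _ hi => Nat.le_sub_one_of_lt (mem_range.1 hi),
    fun A hA => ⟨_, mem_range.2 (hr.rank_lt_card (c A)), hr.isMaxOf_harmful_rank (hc A hA)⟩⟩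

theorem sp_le_card_sub_one [Nonempty X] (hc : IsChoice c) : sp c ≤ Fintype.card X - 1 :=
  have ⟨_, hr⟩ := exists_isSLO (X := X)
  sp_le_of_rsp hr (rsp_range_card hc hr) fun _ hi => Nat.le_sub_one_of_lt (mem_range.1 hi)

theorem exists_rsp_le_sp [Nonempty X] (hc : IsChoice c) :
    ∃ r, IsSLO r ∧ ∃ I, RSP c r I ∧ ∀ i ∈ I, i ≤ sp c := by
  obtain ⟨r, hr⟩ := exists_isSLO (X := X)
  have hI := rsp_range_card hc hr
  have hmem : sp c ∈ {m : ℕ | ∃ r : X → X → Prop, IsSLO r ∧ ∃ I : Finset ℕ,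
      RSP c r I ∧ m ∈ I ∧ ∀ i ∈ I, i ≤ m} :=
    Nat.sInf_mem ⟨_, r, hr, _, hI, max'_mem _ hI.1, fun _ => le_max' _ _⟩
  obtain ⟨r, hr, I, hI, -, hle⟩ := hmem
  exact ⟨r, hr, I, hI, hle⟩

theorem not_revealedOver_of_rsp (hr : IsSLO r) {I : Finset ℕ} (hI : RSP c r I)
    (hI_le : ∀ i ∈ I, i ≤ Fintype.card X - 2) (hX : 2 ≤ Fintype.card X) :
    ∃ v w, v ≠ w ∧ ¬ RevealedOver c v w := by
  obtain ⟨v, hv⟩ := hr.exists_rank_eq (k := Fintype.card X - 1) (by omega)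
  obtain ⟨w, hw⟩ := hr.exists_rank_eq (k := Fintype.card X - 2) (by omega)
  have hvw : v ≠ w := fun h => by rw [h] at hv; omega
  refine ⟨v, w, hvw, fun ⟨A, hwA, hA⟩ => ?_⟩
  obtain ⟨i, hi, -, hmax⟩ := hI.2.2 A ⟨w, hwA⟩
  have hi_le := hI_le i hi
  rcases hA ▸ hmax w hwA (hA ▸ hvw.symm) with ⟨hw_top, -⟩ | ⟨-, -, hvw'⟩
  · exact absurd (mem_topSet_iff.1 hw_top) (by omega)
  · exact absurd (hr.rank_lt_rank hvw') (by omega)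

theorem rsp_range_card_sub_one (hc : IsChoice c) (hr : IsSLO r) {v w : X}
    (hv : rank r v = Fintype.card X - 1) (hw : rank r w = Fintype.card X - 2)
    (hX : 2 ≤ Fintype.card X) (h : ¬ RevealedOver c v w) :
    RSP c r (range (Fintype.card X - 1)) := by
  refine ⟨nonempty_range_iff.2 (by omega), fun _ hi => (mem_range.1 hi).le, fun A hA => ?_⟩
  by_cases hAv : c A = v
  · refine ⟨Fintype.card X - 2, mem_range.2 (by omega), hc A hA, fun y hy hyA => ?_⟩
    have hyv : y ≠ v := hAv ▸ hyA
    have hyw : y ≠ w := fun hyw => h ⟨A, hyw ▸ hy, hAv⟩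
    have hy_top : rank r y < Fintype.card X - 2 := by
      have := hr.rank_lt_card y
      have := hr.rank_injective.ne hyv
      have := hr.rank_injective.ne hyw
      omega
    exact Or.inl ⟨hy_top, fun hv_top => absurd (mem_topSet_iff.1 hv_top) (by rw [hAv]; omega)⟩
  · have := hr.rank_lt_card (c A)
    have := hr.rank_injective.ne hAv
    exact ⟨_, mem_range.2 (by omega), hr.isMaxOf_harmful_rank (hc A hA)⟩

theorem sp_le_card_sub_two_of_not_revealedOver (hc : IsChoice c) {v w : X}
    (hvw : v ≠ w) (h : ¬ RevealedOver c v w) : sp c ≤ Fintype.card X - 2 := by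
  classical
  obtain ⟨r, hr, hv, hw⟩ := exists_isSLO_rank_eq hvw
  have hX : 2 ≤ Fintype.card X := by simpa [card_pair hvw] using card_le_univ {v, w}
  refine sp_le_of_rsp hr (rsp_range_card_sub_one hc hr hv hw hX h) fun _ hi => ?_
  have := mem_range.1 hi
  omega

theorem sp_eq_card_sub_one_iff [DecidableEq X] (hc : IsChoice c) (hX : 2 ≤ Fintype.card X) :
    sp c = Fintype.card X - 1 ↔ Inconsistent c := by
  have : Nonempty X := Fintype.card_pos_iff.1 (by omega)
  rw [inconsistent_iff_forall_revealedOver hc]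
  refine ⟨fun hsp x y hxy => ?_, fun h => ?_⟩
  · by_contra hxy'
    have := sp_le_card_sub_two_of_not_revealedOver hc hxy hxy'
    omega
  · refine le_antisymm (sp_le_card_sub_one hc) (not_lt.1 fun hlt => ?_)
    obtain ⟨r, hr, I, hI, hI_le⟩ := exists_rsp_le_sp hc
    obtain ⟨v, w, hvw, hvw'⟩ := not_revealedOver_of_rsp hr hI (fun i hi => by
      have := hI_le i hi; omega) hX
    exact hvw' (h v w hvw)

end SelfPunishment

theorem stmt16 [Fintype X] [DecidableEq X] (c : Finset X → X) (hc : IsChoice c)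
    (hcard : 2 ≤ Fintype.card X) :
    sp c = Fintype.card X - 1 ↔ ViolatesCNS c (Fintype.card X - 1) :=
  have : Nonempty X := Fintype.card_pos_iff.1 (by omega)
  (sp_eq_card_sub_one_iff hc hcard).trans violatesCNS_card_sub_one_iff.symm
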